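/- arXiv:2403.04497 — 2 statements merged into one kernel-verified Lean document; each statement's English description precedes it below -/
import Mathlib

section
/- Over a finite field k of odd characteristic with the split symmetric bilinear form of rank D = 2d, two maximal isotropic subspaces W and W′ lie in the same SO(Q̄)-orbit if and only if dim(W / (W ∩ W′)) is even. -/
noncomputable section

open scoped Classical

variable {k : Type*} [Field k]

/-- A subspace `W` is isotropic for `Q` if `W ⊆ W^⊥`. -/
def IsIsotropic {D : ℕ} (Q : LinearMap.BilinForm k (Fin D → k))
    (W : Submodule k (Fin D → k)) : Prop :=
  ∀ x ∈ W, ∀ y ∈ W, Q x y = 0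

/-- A maximal isotropic subspace of the split form of rank `2d` has dimension `d`. -/
def IsMaxIsotropic {d : ℕ} (Q : LinearMap.BilinForm k (Fin (2 * d) → k))
    (W : Submodule k (Fin (2 * d) → k)) : Prop :=
  IsIsotropic Q W ∧ Module.finrank k W = d

/-- Membership in the special orthogonal group `SO(Q)`. -/
def IsSO {D : ℕ} (Q : LinearMap.BilinForm k (Fin D → k))
    (g : (Fin D → k) ≃ₗ[k] (Fin D → k)) : Prop :=
  (∀ x y, Q (g x) (g y) = Q x y) ∧ LinearMap.det (g : (Fin D → k) →ₗ[k] (Fin D → k)) = 1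

section PfAux

open Module

variable {M : Type*} [AddCommGroup M] [Module k M]

/-- The reflection in a vector `v` with `Q v v = -2`, as a plain map. -/
noncomputable def reflMap (Q : LinearMap.BilinForm k M) (v : M) : M →ₗ[k] M :=
  LinearMap.id + (Q.flip v).smulRight v

lemma reflMap_apply (Q : LinearMap.BilinForm k M) (v x : M) :
    reflMap Q v x = x + Q x v • v := rfl

lemma reflMap_involutive (Q : LinearMap.BilinForm k M) (v : M)
    (hv : Q v v = -2) : Function.Involutive (reflMap Q v) := by
  intro x
  simp only [reflMap_apply, map_add, LinearMap.add_apply, map_smul, LinearMap.smul_apply,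
    smul_eq_mul, hv]
  module

lemma reflMap_isometry (Q : LinearMap.BilinForm k M) (v : M)
    (hs : ∀ x y, Q x y = Q y x) (hv : Q v v = -2) (x y : M) :
    Q (reflMap Q v x) (reflMap Q v y) = Q x y := by
  simp only [reflMap_apply, map_add, map_smul, LinearMap.add_apply, LinearMap.smul_apply,
    smul_eq_mul, hv]
  have h := hs v y
  ring_nf
  rw [hs y v]
  ring

lemma reflMap_det [FiniteDimensional k M] (Q : LinearMap.BilinForm k M) (v : M)
    (hs : ∀ x y, Q x y = Q y x) (hv : Q v v = -2) (h2 : (2 : k) ≠ 0) :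
    LinearMap.det (reflMap Q v) = -1 := by
  classical
  have hvv : Q v v ≠ 0 := by rw [hv]; exact neg_ne_zero.2 h2
  have hv0 : v ≠ 0 := by rintro rfl; simp at hvv
  have hcompl : IsCompl (k ∙ v) (Q.orthogonal (k ∙ v)) :=
    LinearMap.BilinForm.isCompl_span_singleton_orthogonal hvv
  set p := (k ∙ v) with hp
  set q := Q.orthogonal (k ∙ v) with hq
  set e := Submodule.prodEquivOfIsCompl p q hcompl with he
  have key : reflMap Q v =
      (e : p × q →ₗ[k] M) ∘ₗ ((-LinearMap.id : p →ₗ[k] p).prodMap (LinearMap.id : q →ₗ[k] q))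
        ∘ₗ (e.symm : M →ₗ[k] p × q) := by
    apply LinearMap.ext
    intro x
    obtain ⟨z, rfl⟩ : ∃ z : p × q, e z = x := ⟨e.symm x, e.apply_symm_apply x⟩
    simp only [LinearMap.comp_apply, LinearEquiv.coe_coe, LinearEquiv.symm_apply_apply]
    obtain ⟨⟨a, ha⟩, ⟨b, hb⟩⟩ := z
    obtain ⟨c, rfl⟩ := Submodule.mem_span_singleton.1 ha
    have hbv : Q b v = 0 := by
      rw [hs b v]
      exact (LinearMap.BilinForm.mem_orthogonal_iff.1 hb) v (Submodule.mem_span_singleton_self v)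
    simp only [Submodule.coe_prodEquivOfIsCompl', LinearMap.prodMap_apply, LinearMap.neg_apply,
      LinearMap.id_apply, reflMap_apply]
    simp only [he, Submodule.coe_prodEquivOfIsCompl', NegMemClass.coe_neg, SetLike.val_smul]
    rw [map_add, LinearMap.add_apply, map_smul, LinearMap.smul_apply, hbv, hv]
    match_scalars <;> first | (simp only [smul_eq_mul]; ring) | ring
  rw [key, LinearMap.det_conj]
  have hdet : LinearMap.det ((-LinearMap.id : p →ₗ[k] p).prodMap (LinearMap.id : q →ₗ[k] q)) =
      LinearMap.det (-LinearMap.id : p →ₗ[k] p) * LinearMap.det (LinearMap.id : q →ₗ[k] q) := by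
    let b1 := Module.finBasis k p
    let b2 := Module.finBasis k q
    rw [← LinearMap.det_toMatrix (b1.prod b2), LinearMap.toMatrix_prodMap,
      Matrix.det_fromBlocks_zero₂₁, LinearMap.det_toMatrix, LinearMap.det_toMatrix]
  rw [hdet]
  have : (-LinearMap.id : p →ₗ[k] p) = (-1 : k) • LinearMap.id := by ext x; simp
  rw [this, LinearMap.det_smul, finrank_span_singleton hv0]
  simp

variable {d : ℕ}

lemma pf_formula (Q : LinearMap.BilinForm k (Fin (2 * d) → k))
    (hgram : ∀ i j, Q (Pi.single i 1) (Pi.single j 1) =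
      if (i : ℕ) + (j : ℕ) = 2 * d - 1 then 1 else 0)
    (x y : Fin (2 * d) → k) : Q x y = ∑ i, x i * y (Fin.rev i) := by
  classical
  have hbasis : ∀ z : Fin (2 * d) → k, z = ∑ i, z i • (Pi.single i (1 : k) : Fin (2 * d) → k) := by
    intro z; funext j
    simp [Finset.sum_apply, Pi.single_apply]
  have hg : ∀ i j : Fin (2 * d), Q (Pi.single i 1) (Pi.single j 1) =
      if j = Fin.rev i then 1 else 0 := by
    intro i j
    rw [hgram]
    congr 1
    have hi := i.isLt; have hj := j.isLt
    simp only [eq_iff_iff]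
    constructor
    · intro h; ext; simp [Fin.rev]; omega
    · intro h; subst h; simp [Fin.rev]; omega
  conv_lhs => rw [hbasis x, hbasis y]
  simp only [map_sum, map_smul, LinearMap.sum_apply, LinearMap.smul_apply, smul_eq_mul, hg,
    mul_ite, mul_one, mul_zero]
  simp only [Finset.mul_sum]
  rw [Finset.sum_comm]
  simp [mul_ite, mul_zero, Finset.sum_ite_eq', mul_comm]

lemma pf_symm (Q : LinearMap.BilinForm k (Fin (2 * d) → k))
    (hQ : ∀ x y, Q x y = ∑ i, x i * y (Fin.rev i)) (x y : Fin (2 * d) → k) :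
    Q x y = Q y x := by
  rw [hQ, hQ]
  exact Fintype.sum_equiv (Fin.revPerm) _ _ (by intro i; simp [mul_comm])

lemma pf_nondeg (Q : LinearMap.BilinForm k (Fin (2 * d) → k))
    (hQ : ∀ x y, Q x y = ∑ i, x i * y (Fin.rev i)) :
    Q.Nondegenerate := by
  suffices hL : ∀ m : Fin (2 * d) → k, (∀ n, Q m n = 0) → m = 0 from
    ⟨hL, fun m hm => hL m fun n => (pf_symm Q hQ m n).trans (hm n)⟩
  intro m hm
  funext j
  have := hm (Pi.single (Fin.rev j) 1)
  rw [hQ] at this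
  classical
  rw [Finset.sum_eq_single j] at this
  · simpa using this
  · intro b _ hb; simp [Pi.single_apply, Fin.rev_inj, hb]
  · simp

set_option synthInstance.maxHeartbeats 1000000 in
set_option maxHeartbeats 1000000 in
lemma pf_stab_det_one (Q : LinearMap.BilinForm k (Fin (2 * d) → k))
    (hs : ∀ x y, Q x y = Q y x) (hnd : Q.Nondegenerate)
    (W : Submodule k (Fin (2 * d) → k))
    (hiso : ∀ x ∈ W, ∀ y ∈ W, Q x y = 0) (hdim : finrank k W = d)
    (g : (Fin (2 * d) → k) ≃ₗ[k] (Fin (2 * d) → k))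
    (hisom : ∀ x y, Q (g x) (g y) = Q x y)
    (hstab : W.map (g : (Fin (2 * d) → k) →ₗ[k] (Fin (2 * d) → k)) = W) :
    LinearMap.det (g : (Fin (2 * d) → k) →ₗ[k] (Fin (2 * d) → k)) = 1 := by
  classical
  obtain ⟨C, hC⟩ := Submodule.exists_isCompl W
  have hfull : finrank k (Fin (2 * d) → k) = 2 * d := Module.finrank_fin_fun (R := k)
  have hCd : finrank k C = d := by
    have h := Submodule.finrank_add_eq_of_isCompl hC
    rw [hdim, hfull] at h; omega
  let bW : Basis (Fin d) k W := Module.finBasisOfFinrankEq k W hdim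
  let bC : Basis (Fin d) k C := Module.finBasisOfFinrankEq k C hCd
  let e := Submodule.prodEquivOfIsCompl W C hC
  let b : Basis (Fin d ⊕ Fin d) k (Fin (2 * d) → k) := (bW.prod bC).map e
  have hbl : ∀ i, b (Sum.inl i) = (bW i : Fin (2 * d) → k) := by
    intro i
    simp [b, e, Basis.map_apply, Basis.prod_apply, Submodule.coe_prodEquivOfIsCompl']
  have hbr : ∀ i, b (Sum.inr i) = (bC i : Fin (2 * d) → k) := by
    intro i
    simp [b, e, Basis.map_apply, Basis.prod_apply, Submodule.coe_prodEquivOfIsCompl']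
  -- coordinates of elements of W in the C-part vanish
  have hreprW : ∀ x ∈ W, ∀ i, b.repr x (Sum.inr i) = 0 := by
    intro x hx i
    have hsymm : e.symm x = (⟨x, hx⟩, (0 : C)) :=
      Submodule.prodEquivOfIsCompl_symm_apply_left (h := hC) (x := ⟨x, hx⟩)
    have h1 : b.repr x (Sum.inr i) = (bW.prod bC).repr (e.symm x) (Sum.inr i) := rfl
    rw [h1, hsymm, Basis.prod_repr_inr]
    simp
  -- g maps W into W
  have hgW : ∀ x ∈ W, g x ∈ W := by
    intro x hx
    rw [← hstab]
    exact Submodule.mem_map_of_mem hx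
  set M := LinearMap.toMatrix b b (g : (Fin (2 * d) → k) →ₗ[k] (Fin (2 * d) → k)) with hM
  have hM0 : ∀ i j, M (Sum.inr i) (Sum.inl j) = 0 := by
    intro i j
    rw [hM, LinearMap.toMatrix_apply]
    refine hreprW _ ?_ i
    rw [hbl]
    exact hgW _ (bW j).2
  set A : Matrix (Fin d) (Fin d) k := Matrix.of fun i j => M (Sum.inl i) (Sum.inl j) with hA
  set Bm : Matrix (Fin d) (Fin d) k := Matrix.of fun i j => M (Sum.inl i) (Sum.inr j) with hBm
  set Dm : Matrix (Fin d) (Fin d) k := Matrix.of fun i j => M (Sum.inr i) (Sum.inr j) with hDm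
  have hblocks : M = Matrix.fromBlocks A Bm 0 Dm := by
    ext i j
    rcases i with i | i <;> rcases j with j | j <;>
      simp [Matrix.fromBlocks, hA, hBm, hDm, hM0]
  -- the pairing matrix
  set P : Matrix (Fin d) (Fin d) k := Matrix.of fun i j => Q (bC i) (bW j) with hP
  -- expansion of g on basis vectors
  have hexp : ∀ s : Fin d ⊕ Fin d, g (b s) = ∑ t, M t s • b t := by
    intro s
    conv_lhs => rw [← Basis.sum_repr b (g (b s))]
    refine Finset.sum_congr rfl fun t _ => ?_
    rw [hM, LinearMap.toMatrix_apply]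
    rfl
  have hQbb : ∀ i j : Fin d, Q (b (Sum.inl i)) (b (Sum.inl j)) = 0 := by
    intro i j; rw [hbl, hbl]; exact hiso _ (bW i).2 _ (bW j).2
  -- the key matrix identity
  have hkey : Dm.transpose * P * A = P := by
    ext p q
    have hPexp : P p q = ∑ i, ∑ j, Dm i p * (A j q * P i j) := by
      have h1 : P p q = Q (g (b (Sum.inr p))) (g (b (Sum.inl q))) := by
        rw [hisom, hbl, hbr]; rfl
      rw [h1, hexp (Sum.inr p), hexp (Sum.inl q)]
      simp only [map_sum, LinearMap.sum_apply, map_smul, LinearMap.smul_apply, smul_eq_mul,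
        Finset.mul_sum]
      rw [Fintype.sum_sum_type]
      have h2 : ∑ a : Fin d, ∑ i : Fin d ⊕ Fin d,
          M (Sum.inr a) (Sum.inl q) * (M i (Sum.inr p) * Q (b i) (b (Sum.inr a))) = 0 := by
        refine Finset.sum_eq_zero fun a _ => Finset.sum_eq_zero fun i _ => ?_
        rw [hM0 a q]; ring
      rw [h2, add_zero]
      have h3 : ∀ a : Fin d, (∑ i : Fin d ⊕ Fin d,
          M (Sum.inl a) (Sum.inl q) * (M i (Sum.inr p) * Q (b i) (b (Sum.inl a)))) =
          ∑ i : Fin d, A a q * (Dm i p * P i a) := by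
        intro a
        rw [Fintype.sum_sum_type]
        have hz : (∑ i : Fin d,
            M (Sum.inl a) (Sum.inl q) * (M (Sum.inl i) (Sum.inr p) *
              Q (b (Sum.inl i)) (b (Sum.inl a)))) = 0 :=
          Finset.sum_eq_zero fun i _ => by rw [hQbb i a]; ring
        rw [hz, zero_add]
        refine Finset.sum_congr rfl fun i _ => ?_
        rw [hbl, hbr]
        rfl
      rw [Finset.sum_congr rfl fun a _ => h3 a]
      rw [Finset.sum_comm]
      exact Finset.sum_congr rfl fun i _ => Finset.sum_congr rfl fun j _ => by ring
    rw [hPexp]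
    simp only [Matrix.mul_apply, Matrix.transpose_apply, Finset.sum_mul]
    rw [Finset.sum_comm]
    exact Finset.sum_congr rfl fun i _ => Finset.sum_congr rfl fun j _ => by ring
  -- P is invertible
  have hPdet : P.det ≠ 0 := by
    intro h0
    obtain ⟨v, hv0, hvP⟩ := Matrix.exists_mulVec_eq_zero_iff.2 h0
    set w : Fin (2 * d) → k := ∑ j, v j • (bW j : Fin (2 * d) → k) with hw
    have hQWw : ∀ u ∈ W, Q u w = 0 := by
      intro u hu
      rw [hw, map_sum]
      refine Finset.sum_eq_zero fun j _ => ?_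
      rw [map_smul, smul_eq_mul, hiso u hu _ (bW j).2, mul_zero]
    have hQCw : ∀ i, Q (bC i) w = 0 := by
      intro i
      have h4 : Q (bC i) w = ∑ j, P i j * v j := by
        rw [hw, map_sum]
        refine Finset.sum_congr rfl fun j _ => ?_
        rw [map_smul, smul_eq_mul]
        show v j * Q (bC i) (bW j) = P i j * v j
        rw [mul_comm]; rfl
      rw [h4]
      simpa [Matrix.mulVec, dotProduct] using congrFun hvP i
    have hCside : ∀ u : C, Q (u : Fin (2 * d) → k) w = 0 := by
      intro u
      show ((Q.flip w).comp C.subtype) u = 0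
      conv_lhs => rw [← Basis.sum_repr bC u]
      rw [map_sum]
      refine Finset.sum_eq_zero fun i _ => ?_
      rw [map_smul, smul_eq_mul]
      have h5 : ((Q.flip w).comp C.subtype) (bC i) = Q (bC i) w := rfl
      rw [h5, hQCw i, mul_zero]
    have hallw : ∀ x, Q x w = 0 := by
      intro x
      have hx : x = ((e.symm x).1 : Fin (2 * d) → k) + ((e.symm x).2 : Fin (2 * d) → k) := by
        conv_lhs => rw [← e.apply_symm_apply x]
        rfl
      rw [hx, map_add, LinearMap.add_apply, hQWw _ (e.symm x).1.2, hCside (e.symm x).2,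
        add_zero]
    have hw0 : w = 0 := hnd.1 w fun n => (hs w n).trans (hallw n)
    have hsum0 : (∑ j, v j • bW j : W) = 0 := by
      apply Submodule.injective_subtype W
      have h6 : W.subtype (∑ j, v j • bW j) = w := by
        rw [map_sum, hw]
        exact Finset.sum_congr rfl fun j _ => rfl
      rw [h6, hw0, map_zero]
    have := Fintype.linearIndependent_iff.1 bW.linearIndependent v hsum0
    exact hv0 (funext fun j => this j)
  have hg' : LinearMap.det (g : (Fin (2 * d) → k) →ₗ[k] (Fin (2 * d) → k)) =
      A.det * Dm.det := by
    rw [← LinearMap.det_toMatrix b, ← hM, hblocks, Matrix.det_fromBlocks_zero₂₁]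
  have hdets := congrArg Matrix.det hkey
  rw [Matrix.det_mul, Matrix.det_mul, Matrix.det_transpose] at hdets
  have hDA : Dm.det * A.det = 1 := by
    have h' : (Dm.det * A.det) * P.det = 1 * P.det := by
      rw [one_mul]; linear_combination hdets
    exact mul_right_cancel₀ hPdet h'
  rw [hg', mul_comm, hDA]

lemma pf_exists_isometry (Q : LinearMap.BilinForm k (Fin (2 * d) → k))
    (hs : ∀ x y, Q x y = Q y x) (hnd : Q.Nondegenerate) (h2 : (2 : k) ≠ 0) :
    ∀ c : ℕ, ∀ W W' : Submodule k (Fin (2 * d) → k),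
      (∀ x ∈ W, ∀ y ∈ W, Q x y = 0) → finrank k W = d →
      (∀ x ∈ W', ∀ y ∈ W', Q x y = 0) → finrank k W' = d →
      d - finrank k (W ⊓ W' : Submodule k (Fin (2 * d) → k)) = c →
      ∃ g : (Fin (2 * d) → k) ≃ₗ[k] (Fin (2 * d) → k),
        (∀ x y, Q (g x) (g y) = Q x y) ∧
        LinearMap.det (g : (Fin (2 * d) → k) →ₗ[k] (Fin (2 * d) → k)) = (-1 : k) ^ c ∧
        W.map (g : (Fin (2 * d) → k) →ₗ[k] (Fin (2 * d) → k)) = W' := by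
  have hrefl : Q.IsRefl := fun x y h => (hs x y) ▸ h
  have horth : ∀ (U : Submodule k (Fin (2 * d) → k)),
      (∀ x ∈ U, ∀ y ∈ U, Q x y = 0) → finrank k U = d → Q.orthogonal U = U := by
    intro U hiso hdim
    have hle : U ≤ Q.orthogonal U := fun x hx =>
      (LinearMap.BilinForm.mem_orthogonal_iff).2 fun n hn => hiso n hn x hx
    have h1 : finrank k (Q.orthogonal U) = 2 * d - finrank k U :=
      (LinearMap.BilinForm.finrank_orthogonal hnd U).trans
        (by rw [Module.finrank_fin_fun (R := k)])
    refine (Submodule.eq_of_le_of_finrank_le hle ?_).symm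
    rw [h1, hdim]; omega
  intro c
  induction c with
  | zero =>
    intro W W' hisoW hdW hisoW' hdW' hc
    have hWle : finrank k (W ⊓ W' : Submodule k (Fin (2 * d) → k)) ≤ d := by
      simpa [hdW] using Submodule.finrank_mono (inf_le_left (a := W) (b := W'))
    have hinf : finrank k (W ⊓ W' : Submodule k (Fin (2 * d) → k)) = d := by omega
    have hWW' : W = W' := by
      have h1 : (W ⊓ W' : Submodule k (Fin (2 * d) → k)) = W :=
        Submodule.eq_of_le_of_finrank_le inf_le_left (by rw [hdW, hinf])
      have h2' : (W ⊓ W' : Submodule k (Fin (2 * d) → k)) = W' :=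
        Submodule.eq_of_le_of_finrank_le inf_le_right (by rw [hdW', hinf])
      rw [← h1, h2']
    refine ⟨LinearEquiv.refl k _, by simp, by simp, by simpa using hWW'⟩
  | succ c ih =>
    intro W W' hisoW hdW hisoW' hdW' hc
    -- W ≠ W', pick u ∈ W \ W'
    have hWle : finrank k (W ⊓ W' : Submodule k (Fin (2 * d) → k)) ≤ d := by
      simpa [hdW] using Submodule.finrank_mono (inf_le_left (a := W) (b := W'))
    have hnotle : ¬ W ≤ W' := by
      intro hle
      have : (W ⊓ W' : Submodule k (Fin (2 * d) → k)) = W := inf_eq_left.2 hle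
      rw [this, hdW] at hc; omega
    obtain ⟨u, huW, huW'⟩ := SetLike.not_le_iff_exists.1 hnotle
    -- find w' ∈ W' with Q u w' = 1
    have hu_orth : u ∉ Q.orthogonal W' := by rw [horth W' hisoW' hdW']; exact huW'
    have : ∃ n ∈ W', Q n u ≠ 0 := by
      by_contra hcon
      push_neg at hcon
      exact hu_orth ((LinearMap.BilinForm.mem_orthogonal_iff).2 fun n hn => hcon n hn)
    obtain ⟨n, hnW', hnu⟩ := this
    set w' : Fin (2 * d) → k := (Q n u)⁻¹ • n with hw'
    have hw'W' : w' ∈ W' := Submodule.smul_mem _ _ hnW'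
    have hQuw' : Q u w' = 1 := by
      rw [hw', map_smul, smul_eq_mul, hs u n, inv_mul_cancel₀ hnu]
    have hQuu : Q u u = 0 := hisoW u huW u huW
    have hQw'w' : Q w' w' = 0 := hisoW' w' hw'W' w' hw'W'
    set v : Fin (2 * d) → k := u - w' with hv
    have hQvv : Q v v = -2 := by
      rw [hv]
      simp only [map_sub, LinearMap.sub_apply]
      rw [hQuu, hQw'w', hs w' u, hQuw']
      ring
    set r := LinearEquiv.ofInvolutive (reflMap Q v) (reflMap_involutive Q v hQvv) with hr
    have hrapp : ∀ x, r x = x + Q x v • v := fun x => rfl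
    have hrlin : (r : (Fin (2 * d) → k) →ₗ[k] (Fin (2 * d) → k)) = reflMap Q v := by
      ext x; rfl
    have hrslin : (r.symm : (Fin (2 * d) → k) →ₗ[k] (Fin (2 * d) → k)) = reflMap Q v := by
      ext x; rfl
    set W'' := W'.map (r : (Fin (2 * d) → k) →ₗ[k] (Fin (2 * d) → k)) with hW''
    have hisoW'' : ∀ x ∈ W'', ∀ y ∈ W'', Q x y = 0 := by
      rintro x hx y hy
      obtain ⟨a, ha, rfl⟩ := Submodule.mem_map.1 hx
      obtain ⟨b, hb, rfl⟩ := Submodule.mem_map.1 hy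
      rw [hrlin]
      rw [reflMap_isometry Q v hs hQvv]
      exact hisoW' a ha b hb
    have hdW'' : finrank k W'' = d := by
      rw [hW'', LinearEquiv.finrank_map_eq r W']
      exact hdW'
    have hfix : ∀ x ∈ W ⊓ W', r x = x := by
      rintro x ⟨hxW, hxW'⟩
      rw [hrapp, hv, map_sub, hisoW x hxW u huW, hisoW' x hxW' w' hw'W']
      simp
    have hQw'v : Q w' v = 1 := by
      rw [hv, map_sub, hQw'w', hs w' u, hQuw']; ring
    have hrw' : r w' = u := by
      rw [hrapp, hQw'v, hv]
      module
    have hu0 : u ≠ 0 := by rintro rfl; exact huW' (zero_mem W')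
    have huWW'' : u ∈ W'' := Submodule.mem_map.2 ⟨w', hw'W', hrw'⟩
    have hinter : W ⊓ W'' = (W ⊓ W') ⊔ (k ∙ u) := by
      apply le_antisymm
      · rintro x ⟨hxW, hxW''⟩
        obtain ⟨y, hyW', hyx⟩ := Submodule.mem_map.1 hxW''
        rw [hrlin] at hyx
        have hxy : x = y + Q y v • v := by rw [← hyx]; rfl
        have hz : x - Q y v • u = y - Q y v • w' := by
          rw [hxy, hv]; module
        have hzmem : x - Q y v • u ∈ W ⊓ W' := by
          constructor
          · exact Submodule.sub_mem _ hxW (Submodule.smul_mem _ _ huW)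
          · rw [hz]; exact Submodule.sub_mem _ hyW' (Submodule.smul_mem _ _ hw'W')
        have : x = (x - Q y v • u) + Q y v • u := by module
        rw [this]
        exact Submodule.add_mem _ (Submodule.mem_sup_left hzmem)
          (Submodule.mem_sup_right (Submodule.smul_mem _ _ (Submodule.mem_span_singleton_self u)))
      · refine sup_le ?_ ?_
        · rintro x ⟨hxW, hxW'⟩
          exact ⟨hxW, Submodule.mem_map.2 ⟨x, hxW', hfix x ⟨hxW, hxW'⟩⟩⟩
        · rw [Submodule.span_le, Set.singleton_subset_iff]
          exact ⟨huW, huWW''⟩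
    have hdisj : Disjoint (W ⊓ W' : Submodule k (Fin (2 * d) → k)) (k ∙ u) :=
      (Submodule.disjoint_span_singleton' hu0).2 fun hmem => huW' hmem.2
    have hfr : finrank k (W ⊓ W'' : Submodule k (Fin (2 * d) → k)) =
        finrank k (W ⊓ W' : Submodule k (Fin (2 * d) → k)) + 1 := by
      have hsum := Submodule.finrank_sup_add_finrank_inf_eq (W ⊓ W') (k ∙ u)
      rw [disjoint_iff.1 hdisj, finrank_bot, finrank_span_singleton hu0] at hsum
      rw [hinter]
      omega
    have hc' : d - finrank k (W ⊓ W'' : Submodule k (Fin (2 * d) → k)) = c := by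
      rw [hfr]; omega
    obtain ⟨g', hg'iso, hg'det, hg'map⟩ := ih W W'' hisoW hdW hisoW'' hdW'' hc'
    refine ⟨g'.trans r.symm, ?_, ?_, ?_⟩
    · intro x y
      have h1 := reflMap_isometry Q v hs hQvv (r.symm (g' x)) (r.symm (g' y))
      have h2 : reflMap Q v (r.symm (g' x)) = g' x := by
        rw [← hrlin]; exact r.apply_symm_apply _
      have h3 : reflMap Q v (r.symm (g' y)) = g' y := by
        rw [← hrlin]; exact r.apply_symm_apply _
      rw [h2, h3] at h1
      calc Q ((g'.trans r.symm) x) ((g'.trans r.symm) y)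
          = Q (r.symm (g' x)) (r.symm (g' y)) := rfl
        _ = Q (g' x) (g' y) := h1.symm
        _ = Q x y := hg'iso x y
    · have hco : ((g'.trans r.symm) : (Fin (2 * d) → k) →ₗ[k] (Fin (2 * d) → k)) =
          (r.symm : (Fin (2 * d) → k) →ₗ[k] (Fin (2 * d) → k)) ∘ₗ
            (g' : (Fin (2 * d) → k) →ₗ[k] (Fin (2 * d) → k)) := by
        ext x; rfl
      rw [hco, LinearMap.det_comp, hrslin, reflMap_det Q v hs hQvv h2, hg'det]
      ring
    · have hco : ((g'.trans r.symm) : (Fin (2 * d) → k) →ₗ[k] (Fin (2 * d) → k)) =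
          (r.symm : (Fin (2 * d) → k) →ₗ[k] (Fin (2 * d) → k)) ∘ₗ
            (g' : (Fin (2 * d) → k) →ₗ[k] (Fin (2 * d) → k)) := by
        ext x; rfl
      rw [hco, Submodule.map_comp, hg'map, hW'', ← Submodule.map_comp]
      have : ((r.symm : (Fin (2 * d) → k) →ₗ[k] (Fin (2 * d) → k)) ∘ₗ
          (r : (Fin (2 * d) → k) →ₗ[k] (Fin (2 * d) → k))) = LinearMap.id := by
        refine LinearMap.ext fun x => ?_
        simp only [LinearMap.comp_apply, LinearEquiv.coe_coe, LinearMap.id_apply]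
        exact r.symm_apply_apply x
      rw [this, Submodule.map_id]

end PfAux

/-- over a finite field of odd characteristic with the split symmetric
form of rank `2d`, two maximal isotropic subspaces `W, W'` lie in the same
`SO(Q)`-orbit if and only if `dim(W/(W ∩ W'))` is even. -/
theorem same_SO_orbit_iff_even [Fintype k] (hchar : ringChar k ≠ 2)
    {d : ℕ}
    (Q : LinearMap.BilinForm k (Fin (2 * d) → k))
    (hgram : ∀ i j, Q (Pi.single i 1) (Pi.single j 1) =
      if (i : ℕ) + (j : ℕ) = 2 * d - 1 then 1 else 0)
    (W W' : Submodule k (Fin (2 * d) → k))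
    (hW : IsMaxIsotropic Q W) (hW' : IsMaxIsotropic Q W') :
    (∃ g : (Fin (2 * d) → k) ≃ₗ[k] (Fin (2 * d) → k), IsSO Q g ∧
        W.map (g : (Fin (2 * d) → k) →ₗ[k] (Fin (2 * d) → k)) = W') ↔
      Even (Module.finrank k W - Module.finrank k ↥(W ⊓ W')) := by
  classical
  simp only [IsMaxIsotropic, IsIsotropic] at hW hW'
  obtain ⟨hisoW, hdW⟩ := hW
  obtain ⟨hisoW', hdW'⟩ := hW'
  simp only [IsSO]
  have h2 : (2 : k) ≠ 0 := Ring.two_ne_zero hchar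
  have hQ : ∀ x y, Q x y = ∑ i, x i * y (Fin.rev i) := pf_formula Q hgram
  have hs : ∀ x y, Q x y = Q y x := pf_symm Q hQ
  have hnd : Q.Nondegenerate := pf_nondeg Q hQ
  rw [hdW]
  obtain ⟨g', hg'iso, hg'det, hg'map⟩ := pf_exists_isometry Q hs hnd h2
    (d - Module.finrank k (W ⊓ W' : Submodule k (Fin (2 * d) → k))) W W'
    hisoW hdW hisoW' hdW' rfl
  constructor
  · rintro ⟨g, ⟨hgiso, hgdet⟩, hgmap⟩
    have hco : ((g.trans g'.symm) : (Fin (2 * d) → k) →ₗ[k] (Fin (2 * d) → k)) =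
        (g'.symm : (Fin (2 * d) → k) →ₗ[k] (Fin (2 * d) → k)) ∘ₗ
          (g : (Fin (2 * d) → k) →ₗ[k] (Fin (2 * d) → k)) := by
      refine LinearMap.ext fun x => rfl
    have hid : ((g'.symm : (Fin (2 * d) → k) →ₗ[k] (Fin (2 * d) → k)) ∘ₗ
        (g' : (Fin (2 * d) → k) →ₗ[k] (Fin (2 * d) → k))) = LinearMap.id := by
      refine LinearMap.ext fun x => ?_
      simp only [LinearMap.comp_apply, LinearEquiv.coe_coe, LinearMap.id_apply]
      exact g'.symm_apply_apply x
    have hsymm_iso : ∀ x y, Q (g'.symm x) (g'.symm y) = Q x y := by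
      intro x y
      conv_rhs => rw [← g'.apply_symm_apply x, ← g'.apply_symm_apply y]
      exact (hg'iso _ _).symm
    have hmapWW : W.map ((g.trans g'.symm) : (Fin (2 * d) → k) →ₗ[k] (Fin (2 * d) → k)) = W := by
      rw [hco, Submodule.map_comp, hgmap, ← hg'map, ← Submodule.map_comp, hid, Submodule.map_id]
    have hdet1 := pf_stab_det_one Q hs hnd W hisoW hdW (g.trans g'.symm)
      (fun x y => by
        calc Q ((g.trans g'.symm) x) ((g.trans g'.symm) y)
            = Q (g'.symm (g x)) (g'.symm (g y)) := rfl
          _ = Q (g x) (g y) := hsymm_iso _ _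
          _ = Q x y := hgiso x y) hmapWW
    have hdet3 : LinearMap.det ((g.trans g'.symm) : (Fin (2 * d) → k) →ₗ[k] (Fin (2 * d) → k)) =
        LinearMap.det ((g'.symm : (Fin (2 * d) → k) →ₗ[k] (Fin (2 * d) → k))) *
          LinearMap.det ((g : (Fin (2 * d) → k) →ₗ[k] (Fin (2 * d) → k))) := by
      rw [hco, LinearMap.det_comp]
    have hdet2 : LinearMap.det ((g'.symm : (Fin (2 * d) → k) →ₗ[k] (Fin (2 * d) → k))) *
        LinearMap.det ((g' : (Fin (2 * d) → k) →ₗ[k] (Fin (2 * d) → k))) = 1 := by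
      rw [← LinearMap.det_comp, hid, LinearMap.det_id]
    rw [hdet1, hgdet, mul_one] at hdet3
    rw [← hdet3, hg'det] at hdet2
    rw [one_mul] at hdet2
    rcases Nat.even_or_odd
        (d - Module.finrank k (W ⊓ W' : Submodule k (Fin (2 * d) → k))) with he | ho
    · exact he
    · exfalso
      rw [Odd.neg_one_pow ho] at hdet2
      exact Ring.neg_one_ne_one_of_char_ne_two hchar hdet2
  · intro heven
    exact ⟨g', ⟨hg'iso, by rw [hg'det, Even.neg_one_pow heven]⟩, hg'map⟩
end
end

section
/- Let W and W′ be isotropic subspaces of dimension d−1 in (k^{2d}, Q̄) split of rank 2d over a finite field k of odd characteristic, and f : W → W′ an invertible linear map. Then there exists g ∈ SO(Q̄) with g|_W = f. -/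
noncomputable section

open scoped Classical

variable {k : Type*} [Field k]

section Aux
open Module Submodule

variable {V : Type*} [AddCommGroup V] [Module k V]

theorem indep_of_pairing {ι : Type*} [Fintype ι] [DecidableEq ι] (B : LinearMap.BilinForm k V)
    (v z : ι → V) (h : ∀ i j, B (v i) (z j) = if i = j then 1 else 0) :
    LinearIndependent k v := by
  rw [Fintype.linearIndependent_iff]
  intro a ha j
  have h0 : B (∑ i, a i • v i) (z j) = 0 := by rw [ha]; simp
  simpa [map_sum, LinearMap.sum_apply, map_smul, LinearMap.smul_apply, h, smul_eq_mul,
    mul_ite, Finset.sum_ite_eq'] using h0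

/-- The model Gram matrix. -/
def GramM (r : ℕ) (D : k) :
    Matrix ((Fin r ⊕ Fin r) ⊕ Fin 2) ((Fin r ⊕ Fin r) ⊕ Fin 2) k :=
  Matrix.fromBlocks (Matrix.fromBlocks 0 1 1 0) 0 0 !![1, 0; 0, D]

theorem GramM_det (r : ℕ) :
    ∃ K : k, K * K = 1 ∧ ∀ D : k, (GramM r D).det = K * D := by
  refine ⟨(Matrix.fromBlocks (0 : Matrix (Fin r) (Fin r) k) (1 : Matrix (Fin r) (Fin r) k) 1 0).det, ?_, fun D => ?_⟩
  · rw [← Matrix.det_mul, Matrix.fromBlocks_multiply]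
    simp [← Matrix.fromBlocks_one]
  · rw [GramM, Matrix.det_fromBlocks_zero₂₁, Matrix.det_fin_two_of]
    ring

end Aux

section Main
open Module Submodule

variable {V : Type*} [AddCommGroup V] [Module k V]

theorem mainBasis [FiniteDimensional k V] (B : LinearMap.BilinForm k V)
    (hsymm : ∀ x y, B x y = B y x) (hnd : B.Nondegenerate) (h2 : (2 : k) ≠ 0)
    (hrep : ∀ a b : k, a ≠ 0 → b ≠ 0 → ∃ s t : k, a * s ^ 2 + b * t ^ 2 = 1)
    {r : ℕ} (hrk : Module.finrank k V = 2 * r + 2) (w : Fin r → V)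
    (hli : LinearIndependent k w) (hiso : ∀ i j, B (w i) (w j) = 0) :
    ∃ (β : Basis ((Fin r ⊕ Fin r) ⊕ Fin 2) k V) (D : k), D ≠ 0 ∧
      (∀ i, β (Sum.inl (Sum.inl i)) = w i) ∧
      ∀ i j, B (β i) (β j) = GramM r D i j := by
  have hrefl : B.IsRefl := fun x y h => by rw [hsymm]; exact h
  -- a "dual" family `v` with `B (v i) (w j) = δᵢⱼ`
  set W : Submodule k V := Submodule.span k (Set.range w) with hWdef
  let bW : Basis (Fin r) k W := Basis.span hli
  have hsurj : Function.Surjective W.dualRestrict := Subspace.dualRestrict_surjective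
  choose ψ hψ using fun i => hsurj (bW.coord i)
  let v : Fin r → V := fun i => (B.toDual hnd).symm (ψ i)
  have hbWApp : ∀ j, (bW j : V) = w j := fun j => congrArg Subtype.val (Module.Basis.span_apply hli j)
  have hvw : ∀ i j, B (v i) (w j) = if i = j then 1 else 0 := by
    intro i j
    have hwj : w j ∈ W := Submodule.subset_span ⟨j, rfl⟩
    have e1 : B (v i) (w j) = ψ i (w j) :=
      LinearMap.BilinForm.apply_toDual_symm_apply (hB := hnd) _ _
    have e2 : ψ i (w j) = bW.coord i ⟨w j, hwj⟩ := by
      have := congrArg (fun φ => φ ⟨w j, hwj⟩) (hψ i)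
      simpa [Submodule.dualRestrict_apply] using this
    have e3 : (⟨w j, hwj⟩ : W) = bW j := Subtype.ext (hbWApp j).symm
    rw [e1, e2, e3, Basis.coord_apply, Basis.repr_self]
    by_cases h : i = j <;> simp [h, Finsupp.single_apply, Ne.symm]
  -- correct `v` to an isotropic dual family `u`
  let C : Fin r → Fin r → k := fun i l => (2 : k)⁻¹ * B (v i) (v l)
  let u : Fin r → V := fun i => v i - ∑ l, C i l • w l
  have hu : ∀ i, u i = v i - ∑ l, C i l • w l := fun i => rfl
  have huw : ∀ i j, B (u i) (w j) = if i = j then 1 else 0 := by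
    intro i j
    rw [hu]
    simp only [map_sub, map_sum, map_smul, LinearMap.sub_apply, LinearMap.sum_apply,
      LinearMap.smul_apply, smul_eq_mul, hiso, mul_zero, Finset.sum_const_zero, sub_zero]
    exact hvw i j
  have hwu : ∀ i j, B (w i) (u j) = if i = j then 1 else 0 := by
    intro i j; rw [hsymm, huw j i]
    by_cases h : i = j <;> simp [h, Ne.symm]
  have hvu : ∀ i j, B (v i) (u j) = B (v i) (v j) - C j i := by
    intro i j
    rw [hu]
    simp only [map_sub, map_sum, map_smul, smul_eq_mul, hvw, mul_ite, mul_one, mul_zero,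
      Finset.sum_ite_eq, Finset.mem_univ, if_true]
  have huu : ∀ i j, B (u i) (u j) = 0 := by
    intro i j
    have e : B (u i) (u j) = B (v i) (u j) - ∑ l, C i l * B (w l) (u j) := by
      rw [hu i]
      simp only [map_sub, map_sum, map_smul, LinearMap.sub_apply, LinearMap.sum_apply,
        LinearMap.smul_apply, smul_eq_mul]
    have e2 : ∑ l, C i l * B (w l) (u j) = C i j := by
      simp only [hwu, mul_ite, mul_one, mul_zero, Finset.sum_ite_eq', Finset.mem_univ, if_true]
    rw [e, hvu, e2]
    have hs : B (v j) (v i) = B (v i) (v j) := hsymm _ _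
    have h21 : (2 : k)⁻¹ * 2 = 1 := inv_mul_cancel₀ h2
    show B (v i) (v j) - (2 : k)⁻¹ * B (v j) (v i) - (2 : k)⁻¹ * B (v i) (v j) = 0
    rw [hs]; ring_nf
    linear_combination (-(B (v i) (v j))) * h21
  -- the hyperbolic subspace H spanned by w and u
  classical
  let vH : (Fin r ⊕ Fin r) → V := Sum.elim w u
  let zH : (Fin r ⊕ Fin r) → V := Sum.elim u w
  have hpair : ∀ i j, B (vH i) (zH j) = if i = j then 1 else 0 := by
    rintro (i | i) (j | j) <;>
      simp [vH, zH, hwu, huw, hiso, huu, Sum.inl.injEq, Sum.inr.injEq]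
  have hliH : LinearIndependent k vH := indep_of_pairing B vH zH hpair
  set H : Submodule k V := Submodule.span k (Set.range vH) with hHdef
  have hmemH : ∀ i, vH i ∈ H := fun i => Submodule.subset_span ⟨i, rfl⟩
  have hmemHz : ∀ j, zH j ∈ H := by
    rintro (j | j)
    · exact hmemH (Sum.inr j)
    · exact hmemH (Sum.inl j)
  have hressH : ∀ x ∈ H, (∀ j, B x (zH j) = 0) → x = 0 := by
    intro x hx h0
    obtain ⟨c, rfl⟩ := (mem_span_range_iff_exists_fun k).mp hx
    have hc : ∀ j, c j = 0 := by
      rintro (j | j)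
      · simpa [map_sum, LinearMap.sum_apply, map_smul, LinearMap.smul_apply, smul_eq_mul,
          hpair, mul_ite, Finset.sum_ite_eq', Sum.inl.injEq, Sum.inr.injEq] using h0 (Sum.inl j)
      · simpa [map_sum, LinearMap.sum_apply, map_smul, LinearMap.smul_apply, smul_eq_mul,
          hpair, mul_ite, Finset.sum_ite_eq', Sum.inl.injEq, Sum.inr.injEq] using h0 (Sum.inr j)
    simp [hc]
  have hresH : (B.restrict H).Nondegenerate := by
    refine LinearMap.BilinForm.Nondegenerate.ofSeparatingLeft ?_
    intro z hz
    exact Subtype.ext (hressH z z.2 (fun j => hz ⟨zH j, hmemHz j⟩))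
  have hcompl : IsCompl H (B.orthogonal H) :=
    (LinearMap.BilinForm.restrict_nondegenerate_iff_isCompl_orthogonal hrefl).mp hresH
  have hfinH : Module.finrank k H = 2 * r := by
    rw [hHdef, finrank_span_eq_card hliH]
    simp [two_mul]
  set O : Submodule k V := B.orthogonal H with hOdef
  have hfinO : Module.finrank k O = 2 := by
    rw [hOdef, LinearMap.BilinForm.finrank_orthogonal hnd H, hrk, hfinH]; omega
  have horthO : ∀ x ∈ O, ∀ n ∈ H, B n x = 0 := by
    intro x hx n hn
    exact (LinearMap.BilinForm.mem_orthogonal_iff.mp hx) n hn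
  have hsup : H ⊔ O = ⊤ := hcompl.sup_eq_top
  have hresO : (B.restrict O).Nondegenerate := by
    refine LinearMap.BilinForm.Nondegenerate.ofSeparatingLeft ?_
    intro z hz
    have hall : ∀ y : V, B (z : V) y = 0 := by
      intro y
      have hy : y ∈ H ⊔ O := by rw [hsup]; trivial
      obtain ⟨p, hp, q, hq, rfl⟩ := Submodule.mem_sup.mp hy
      have h1 : B (z : V) p = 0 := hrefl _ _ (horthO z z.2 p hp)
      have h2' : B (z : V) q = 0 := hz ⟨q, hq⟩
      rw [map_add, h1, h2', add_zero]
    exact Subtype.ext (hnd.1 _ hall)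
  -- an orthogonal basis of O, normalized
  haveI : Invertible (2 : k) := invertibleOfNonzero h2
  have hsymmO : (B.restrict O).IsSymm := by
    constructor
    intro x y
    simp only [LinearMap.BilinForm.restrict_apply, RingHom.id_apply]
    exact hsymm _ _
  obtain ⟨ob, hob⟩ := LinearMap.BilinForm.exists_orthogonal_basis (LinearMap.BilinForm.isSymm_iff.mp hsymmO)
  let b2 : Basis (Fin 2) k O := ob.reindex (finCongr hfinO)
  have hb2ortho : ∀ i j : Fin 2, i ≠ j → B (b2 i : V) (b2 j : V) = 0 := by
    intro i j hij
    have h' : (B.restrict O) (ob ((finCongr hfinO).symm i)) (ob ((finCongr hfinO).symm j)) = 0 :=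
      hob (fun hh => hij (by simpa using congrArg (finCongr hfinO) hh))
    simpa [b2, Basis.reindex_apply, LinearMap.BilinForm.restrict_apply] using h'
  have hb2ne : ∀ i : Fin 2, B (b2 i : V) (b2 i : V) ≠ 0 := by
    intro i hzero
    have hfun : ∀ y : O, (B.restrict O) (b2 i) y = 0 := by
      have : (B.restrict O) (b2 i) = (0 : O →ₗ[k] k) := by
        apply Basis.ext b2
        intro j
        by_cases h : i = j
        · subst h
          simpa [LinearMap.BilinForm.restrict_apply] using hzero
        · simpa [LinearMap.BilinForm.restrict_apply] using hb2ortho i j h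
      intro y; rw [this]; rfl
    have := hresO.1 _ hfun
    exact Basis.ne_zero b2 i this
  obtain ⟨s, t, hst⟩ := hrep _ _ (hb2ne 0) (hb2ne 1)
  set a : k := B (b2 0 : V) (b2 0 : V) with hadef
  set bb : k := B (b2 1 : V) (b2 1 : V) with hbbdef
  let x0 : V := s • (b2 0 : V) + t • (b2 1 : V)
  let x1 : V := (-(bb * t)) • (b2 0 : V) + (a * s) • (b2 1 : V)
  have hx0 : x0 = s • (b2 0 : V) + t • (b2 1 : V) := rfl
  have hx1 : x1 = (-(bb * t)) • (b2 0 : V) + (a * s) • (b2 1 : V) := rfl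
  have hx0mem : x0 ∈ O := O.add_mem (O.smul_mem _ (b2 0).2) (O.smul_mem _ (b2 1).2)
  have hx1mem : x1 ∈ O := O.add_mem (O.smul_mem _ (b2 0).2) (O.smul_mem _ (b2 1).2)
  have h00 : B x0 x0 = 1 := by
    rw [hx0]
    simp only [map_add, map_smul, LinearMap.add_apply, LinearMap.smul_apply, smul_eq_mul,
      hb2ortho 0 1 (by decide), hb2ortho 1 0 (by decide), ← hadef, ← hbbdef]
    linear_combination hst
  have h01 : B x0 x1 = 0 := by
    rw [hx0, hx1]
    simp only [map_add, map_smul, LinearMap.add_apply, LinearMap.smul_apply, smul_eq_mul,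
      hb2ortho 0 1 (by decide), hb2ortho 1 0 (by decide), ← hadef, ← hbbdef]
    ring
  have h10 : B x1 x0 = 0 := by rw [hsymm]; exact h01
  have h11 : B x1 x1 = a * bb := by
    rw [hx1]
    simp only [map_add, map_smul, LinearMap.add_apply, LinearMap.smul_apply, smul_eq_mul,
      hb2ortho 0 1 (by decide), hb2ortho 1 0 (by decide), ← hadef, ← hbbdef]
    linear_combination a * bb * hst
  have ha0 : a ≠ 0 := hb2ne 0
  have hbb0 : bb ≠ 0 := hb2ne 1
  have hD : a * bb ≠ 0 := mul_ne_zero ha0 hbb0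
  -- assemble the full basis
  have hOrt : ∀ x ∈ O, (∀ i, B (w i) x = 0 ∧ B x (w i) = 0) ∧
      (∀ i, B (u i) x = 0 ∧ B x (u i) = 0) := by
    intro x hx
    constructor
    · intro i
      have h1 := horthO x hx (w i) (hmemH (Sum.inl i))
      exact ⟨h1, hrefl _ _ h1⟩
    · intro i
      have h1 := horthO x hx (u i) (hmemH (Sum.inr i))
      exact ⟨h1, hrefl _ _ h1⟩
  have hw_x0 : ∀ i, B (w i) x0 = 0 := fun i => ((hOrt x0 hx0mem).1 i).1
  have hw_x1 : ∀ i, B (w i) x1 = 0 := fun i => ((hOrt x1 hx1mem).1 i).1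
  have hu_x0 : ∀ i, B (u i) x0 = 0 := fun i => ((hOrt x0 hx0mem).2 i).1
  have hu_x1 : ∀ i, B (u i) x1 = 0 := fun i => ((hOrt x1 hx1mem).2 i).1
  have hx0_w : ∀ i, B x0 (w i) = 0 := fun i => ((hOrt x0 hx0mem).1 i).2
  have hx1_w : ∀ i, B x1 (w i) = 0 := fun i => ((hOrt x1 hx1mem).1 i).2
  have hx0_u : ∀ i, B x0 (u i) = 0 := fun i => ((hOrt x0 hx0mem).2 i).2
  have hx1_u : ∀ i, B x1 (u i) = 0 := fun i => ((hOrt x1 hx1mem).2 i).2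
  let vβ : ((Fin r ⊕ Fin r) ⊕ Fin 2) → V := Sum.elim vH ![x0, x1]
  let zβ : ((Fin r ⊕ Fin r) ⊕ Fin 2) → V := Sum.elim zH ![x0, (a * bb)⁻¹ • x1]
  have hpairβ : ∀ i j, B (vβ i) (zβ j) = if i = j then 1 else 0 := by
    rintro ((i | i) | i) ((j | j) | j)
    · simpa [vβ, zβ, vH, zH] using hwu i j
    · simpa [vβ, zβ, vH, zH] using hiso i j
    · fin_cases j <;>
        simp [vβ, zβ, vH, hw_x0, hw_x1, map_smul, smul_eq_mul]
    · simpa [vβ, zβ, vH, zH] using huu i j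
    · simpa [vβ, zβ, vH, zH] using huw i j
    · fin_cases j <;>
        simp [vβ, zβ, vH, hu_x0, hu_x1, map_smul, smul_eq_mul]
    · fin_cases i <;>
        simp [vβ, zβ, zH, hx0_u, hx1_u, hx0_w, hx1_w]
    · fin_cases i <;>
        simp [vβ, zβ, zH, hx0_u, hx1_u, hx0_w, hx1_w]
    · fin_cases i <;> fin_cases j <;>
        simp [vβ, zβ, h00, h01, h10, h11, map_smul, smul_eq_mul, inv_mul_cancel₀ hD] <;>
        field_simp <;> ring
  have hliβ := indep_of_pairing B vβ zβ hpairβ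
  have hcard : Fintype.card ((Fin r ⊕ Fin r) ⊕ Fin 2) = Module.finrank k V := by
    simp only [Fintype.card_sum, Fintype.card_fin, hrk]
    omega
  let β : Basis ((Fin r ⊕ Fin r) ⊕ Fin 2) k V :=
    basisOfLinearIndependentOfCardEqFinrank hliβ hcard
  have hβ : ⇑β = vβ := coe_basisOfLinearIndependentOfCardEqFinrank hliβ hcard
  refine ⟨β, a * bb, hD, ?_, ?_⟩
  · intro i
    rw [hβ]
    rfl
  · intro i j
    rw [hβ]
    rcases i with ((i | i) | i) <;> rcases j with ((j | j) | j)
    · simpa [vβ, vH, GramM] using hiso i j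
    · simpa [vβ, vH, GramM, Matrix.one_apply] using hwu i j
    · fin_cases j <;> simp [vβ, vH, GramM, hw_x0, hw_x1]
    · simpa [vβ, vH, GramM, Matrix.one_apply] using huw i j
    · simpa [vβ, vH, GramM] using huu i j
    · fin_cases j <;> simp [vβ, vH, GramM, hu_x0, hu_x1]
    · fin_cases i <;> simp [vβ, vH, GramM, hx0_w, hx1_w, hx0_u, hx1_u]
    · fin_cases i <;> simp [vβ, vH, GramM, hx0_w, hx1_w, hx0_u, hx1_u]
    · fin_cases i <;> fin_cases j <;>
        simp [vβ, GramM, h00, h01, h10, h11]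

end Main

theorem rep_lemma [Fintype k] (hchar : ringChar k ≠ 2) :
    ∀ a b : k, a ≠ 0 → b ≠ 0 → ∃ s t : k, a * s ^ 2 + b * t ^ 2 = 1 := by
  intro a b ha hb
  have hodd : Fintype.card k % 2 = 1 := by
    obtain ⟨n, hp, hcard⟩ := FiniteField.card k (ringChar k)
    rw [hcard]
    exact Nat.odd_iff.mp ((hp.odd_of_ne_two hchar).pow)
  have hdegf : (Polynomial.C a * Polynomial.X ^ 2 : Polynomial k).degree = 2 :=
    Polynomial.degree_C_mul_X_pow 2 ha
  have hdegg : (Polynomial.C b * Polynomial.X ^ 2 - Polynomial.C 1 : Polynomial k).degree = 2 := by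
    rw [sub_eq_add_neg, ← Polynomial.C_neg]
    rw [Polynomial.degree_add_C (by rw [Polynomial.degree_C_mul_X_pow 2 hb]; decide)]
    exact Polynomial.degree_C_mul_X_pow 2 hb
  obtain ⟨s, t, hst⟩ := FiniteField.exists_root_sum_quadratic hdegf hdegg hodd
  refine ⟨s, t, ?_⟩
  simp only [Polynomial.eval_mul, Polynomial.eval_C, Polynomial.eval_pow, Polynomial.eval_X,
    Polynomial.eval_sub, Polynomial.eval_one] at hst
  linear_combination hst


section Main2
open Matrix
open Module Submodule

variable {V : Type*} [AddCommGroup V] [Module k V]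

theorem isometry_of_gram {ι : Type*} [Fintype ι] [DecidableEq ι] (B : LinearMap.BilinForm k V)
    (b : Basis ι k V) (g : V ≃ₗ[k] V)
    (h : ∀ i j, B (g (b i)) (g (b j)) = B (b i) (b j)) :
    ∀ x y, B (g x) (g y) = B x y := by
  have hcomp : B.comp (g : V →ₗ[k] V) (g : V →ₗ[k] V) = B := by
    apply (LinearMap.BilinForm.toMatrix b).injective
    ext i j
    rw [LinearMap.BilinForm.toMatrix_apply, LinearMap.BilinForm.toMatrix_apply, LinearMap.BilinForm.comp_apply]
    simpa using h i j
  intro x y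
  conv_rhs => rw [← hcomp]
  simp [LinearMap.BilinForm.comp_apply]

theorem isometry_det_pm_one [FiniteDimensional k V] (B : LinearMap.BilinForm k V)
    (hnd : B.Nondegenerate) (g : V ≃ₗ[k] V) (hg : ∀ x y, B (g x) (g y) = B x y) :
    LinearMap.det (g : V →ₗ[k] V) = 1 ∨ LinearMap.det (g : V →ₗ[k] V) = -1 := by
  classical
  let b := Module.finBasis k V
  have hcomp : B.comp (g : V →ₗ[k] V) (g : V →ₗ[k] V) = B := by
    refine LinearMap.ext fun x => LinearMap.ext fun y => ?_
    rw [LinearMap.BilinForm.comp_apply]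
    simpa using hg x y
  set M := LinearMap.toMatrix b b (g : V →ₗ[k] V) with hM
  have hmat : BilinForm.toMatrix b (B.comp (g : V →ₗ[k] V) (g : V →ₗ[k] V)) =
      Mᵀ * BilinForm.toMatrix b B * M := BilinForm.toMatrix_comp b b B _ _
  rw [hcomp] at hmat
  have hne : (BilinForm.toMatrix b B).det ≠ 0 :=
    (LinearMap.BilinForm.nondegenerate_iff_det_ne_zero b).mp hnd
  have hdet : (BilinForm.toMatrix b B).det =
      M.det * (BilinForm.toMatrix b B).det * M.det := by
    conv_lhs => rw [hmat]
    rw [Matrix.det_mul, Matrix.det_mul, Matrix.det_transpose]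
    try ring
  have h1 : (BilinForm.toMatrix b B).det * (M.det * M.det) =
      (BilinForm.toMatrix b B).det * 1 := by linear_combination -hdet
  have h2 : M.det * M.det = 1 := mul_left_cancel₀ hne h1
  have h3 : LinearMap.det (g : V →ₗ[k] V) = M.det := (LinearMap.det_toMatrix b _).symm
  rw [h3]
  exact mul_self_eq_one_iff.mp h2

theorem det_toMatrix_basis_change_aux {ι : Type*} [Fintype ι] [DecidableEq ι]
    (B : LinearMap.BilinForm k V) (b c : Basis ι k V) :
    ∃ e : k, e ≠ 0 ∧ (BilinForm.toMatrix c B).det = e ^ 2 * (BilinForm.toMatrix b B).det := by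
  set P := LinearMap.toMatrix c b (LinearMap.id : V →ₗ[k] V) with hP
  have hcomp : BilinForm.toMatrix c (B.comp LinearMap.id LinearMap.id) =
      Pᵀ * BilinForm.toMatrix b B * P := BilinForm.toMatrix_comp b c B _ _
  rw [LinearMap.BilinForm.comp_id_id] at hcomp
  refine ⟨P.det, ?_, ?_⟩
  · have h1 : LinearMap.toMatrix b c (LinearMap.id : V →ₗ[k] V) * P = 1 := by
      rw [hP, ← LinearMap.toMatrix_comp, LinearMap.id_comp, LinearMap.toMatrix_id]
    have h2 := congrArg Matrix.det h1
    rw [Matrix.det_mul, Matrix.det_one] at h2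
    intro h0
    rw [h0, mul_zero] at h2
    exact zero_ne_one h2
  · rw [hcomp, Matrix.det_mul, Matrix.det_mul, Matrix.det_transpose]; ring

theorem det_toMatrix_basis_change [FiniteDimensional k V] {ι ι' : Type*} [Fintype ι] [Fintype ι']
    [DecidableEq ι] [DecidableEq ι'] (B : LinearMap.BilinForm k V) (b : Basis ι k V)
    (c : Basis ι' k V) :
    ∃ e : k, e ≠ 0 ∧ (BilinForm.toMatrix c B).det = e ^ 2 * (BilinForm.toMatrix b B).det := by
  have hcard : Fintype.card ι' = Fintype.card ι := by
    rw [← Module.finrank_eq_card_basis b, ← Module.finrank_eq_card_basis c]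
  let e : ι' ≃ ι := Fintype.equivOfCardEq hcard
  let c' : Basis ι k V := c.reindex e
  obtain ⟨t, ht, hdet⟩ := det_toMatrix_basis_change_aux B b c'
  refine ⟨t, ht, ?_⟩
  rw [← hdet]
  have hsub : BilinForm.toMatrix c' B = (BilinForm.toMatrix c B).submatrix e.symm e.symm := by
    ext i j
    show LinearMap.BilinForm.toMatrix c' B i j = LinearMap.BilinForm.toMatrix c B (e.symm i) (e.symm j)
    simp [Matrix.submatrix_apply, LinearMap.BilinForm.toMatrix_apply, c', Module.Basis.reindex_apply]
  rw [hsub, Matrix.det_submatrix_equiv_self]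

end Main2

set_option maxHeartbeats 1600000 in
/-- over a finite field of odd characteristic with the split symmetric
form of rank `2d`, any invertible linear map `f : W → W'` between isotropic subspaces of
dimension `d−1` extends to an element `g ∈ SO(Q)`. -/
theorem extend_to_SO [Fintype k] (hchar : ringChar k ≠ 2)
    {d : ℕ} (hd : 1 ≤ d)
    (Q : LinearMap.BilinForm k (Fin (2 * d) → k))
    (hgram : ∀ i j, Q (Pi.single i 1) (Pi.single j 1) =
      if (i : ℕ) + (j : ℕ) = 2 * d - 1 then 1 else 0)
    (W W' : Submodule k (Fin (2 * d) → k))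
    (hW : IsIsotropic Q W) (hW' : IsIsotropic Q W')
    (hdim : Module.finrank k W = d - 1) (hdim' : Module.finrank k W' = d - 1)
    (f : W ≃ₗ[k] W') :
    ∃ g : (Fin (2 * d) → k) ≃ₗ[k] (Fin (2 * d) → k), IsSO Q g ∧
      ∀ x : W, g (x : Fin (2 * d) → k) = (f x : Fin (2 * d) → k) := by
  classical
  have h2 : (2 : k) ≠ 0 := by
    intro h
    have hdvd : ringChar k ∣ 2 := ringChar.dvd (by exact_mod_cast h)
    rcases (Nat.dvd_prime Nat.prime_two).mp hdvd with h1 | h1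
    · exact CharP.ringChar_ne_one h1
    · exact hchar h1
  -- Q is represented by the antidiagonal matrix A
  let A : Matrix (Fin (2 * d)) (Fin (2 * d)) k :=
    fun i j => if (i : ℕ) + (j : ℕ) = 2 * d - 1 then 1 else 0
  have hAapp : ∀ i j, A i j = if (i : ℕ) + (j : ℕ) = 2 * d - 1 then 1 else 0 := fun i j => rfl
  have hA : LinearMap.BilinForm.toMatrix' Q = A := by
    ext i j
    rw [LinearMap.BilinForm.toMatrix'_apply, hAapp]
    exact hgram i j
  have hQ : Q = Matrix.toBilin' A := by
    rw [← hA]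
    exact (Matrix.toBilin'_toMatrix' Q).symm
  have hAsymm : ∀ i j, A i j = A j i := by
    intro i j
    rw [hAapp, hAapp, Nat.add_comm]
  have hsymm : ∀ x y : Fin (2 * d) → k, Q x y = Q y x := by
    intro x y
    rw [hQ, Matrix.toBilin'_apply, Matrix.toBilin'_apply]
    conv_rhs => rw [Finset.sum_comm]
    refine Finset.sum_congr rfl fun a _ => Finset.sum_congr rfl fun b _ => ?_
    rw [hAsymm a b]
    ring
  have hAval : ∀ i i' : Fin (2 * d), A i' (Fin.rev i) = if i' = i then 1 else 0 := by
    intro i i'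
    have h1 := i.isLt
    have h2 := i'.isLt
    rw [hAapp, Fin.val_rev]
    by_cases h : i' = i
    · subst h
      rw [if_pos (by omega), if_pos rfl]
    · rw [if_neg, if_neg h]
      intro hc
      exact h (Fin.ext (by omega))
  have hnd : Q.Nondegenerate := by
    rw [hQ, Matrix.nondegenerate_toBilin'_iff, Matrix.nondegenerate_iff_det_ne_zero,
      ← Matrix.separatingLeft_iff_det_ne_zero, Matrix.separatingLeft_def]
    intro v hv
    funext i
    have h0 := hv (Pi.single (Fin.rev i) 1)
    rw [show A.mulVec (Pi.single (Fin.rev i) 1) = fun i' => A i' (Fin.rev i) * 1 from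
      funext fun i' => by simp] at h0
    have h1 : dotProduct v (fun i' => A i' (Fin.rev i) * 1) = v i := by
      unfold dotProduct
      have he : ∀ i', v i' * (A i' (Fin.rev i) * 1) = if i' = i then v i' else 0 := by
        intro i'
        rw [hAval]
        by_cases h : i' = i <;> simp [h]
      simp only [he, Finset.sum_ite_eq', Finset.mem_univ, if_true]
    rw [h1] at h0
    exact h0
  have hrk : Module.finrank k (Fin (2 * d) → k) = 2 * (d - 1) + 2 := by
    rw [Module.finrank_pi, Fintype.card_fin]
    omega
  -- bases of W and W'
  let bW : Module.Basis (Fin (d - 1)) k W := Module.finBasisOfFinrankEq k W hdim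
  let w : Fin (d - 1) → (Fin (2 * d) → k) := fun i => (bW i : Fin (2 * d) → k)
  have hliw : LinearIndependent k w :=
    LinearIndependent.map' bW.linearIndependent W.subtype (Submodule.ker_subtype W)
  have hisow : ∀ i j, Q (w i) (w j) = 0 := fun i j => hW _ (bW i).2 _ (bW j).2
  let bW' : Module.Basis (Fin (d - 1)) k W' := bW.map f
  let w' : Fin (d - 1) → (Fin (2 * d) → k) := fun i => (bW' i : Fin (2 * d) → k)
  have hliw' : LinearIndependent k w' :=
    LinearIndependent.map' bW'.linearIndependent W'.subtype (Submodule.ker_subtype W')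
  have hisow' : ∀ i j, Q (w' i) (w' j) = 0 := fun i j => hW' _ (bW' i).2 _ (bW' j).2
  obtain ⟨β, D, hD, hβw, hβgram⟩ :=
    mainBasis Q hsymm hnd h2 (rep_lemma hchar) hrk w hliw hisow
  obtain ⟨β', D', hD', hβw', hβgram'⟩ :=
    mainBasis Q hsymm hnd h2 (rep_lemma hchar) hrk w' hliw' hisow'
  -- determinant comparison between the two Gram matrices
  have hGβ : LinearMap.BilinForm.toMatrix β Q = GramM (d - 1) D := by
    ext i j
    rw [LinearMap.BilinForm.toMatrix_apply]
    exact hβgram i j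
  have hGβ' : LinearMap.BilinForm.toMatrix β' Q = GramM (d - 1) D' := by
    ext i j
    rw [LinearMap.BilinForm.toMatrix_apply]
    exact hβgram' i j
  obtain ⟨K, hK1, hKD⟩ := GramM_det (k := k) (d - 1)
  have hdetG0 : (LinearMap.BilinForm.toMatrix β Q).det ≠ 0 :=
    (LinearMap.BilinForm.nondegenerate_iff_det_ne_zero β).mp hnd
  obtain ⟨e, he, hdetβ'⟩ := det_toMatrix_basis_change Q β β'
  have h1 : K * D' = e ^ 2 * (K * D) := by
    rw [← hKD, ← hKD, ← hGβ, ← hGβ']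
    exact hdetβ'
  have hK0 : K ≠ 0 := by
    intro h
    rw [h, zero_mul] at hK1
    exact zero_ne_one hK1
  have he2 : (e⁻¹) ^ 2 * D' = D := by
    have hDD : D' = e ^ 2 * D := by
      have := mul_left_cancel₀ hK0 (by linear_combination h1 : K * D' = K * (e ^ 2 * D))
      exact this
    rw [hDD]
    field_simp
  -- rescale β' so that its Gram matrix is exactly GramM (d-1) D
  let c : kˣ := Units.mk0 (e⁻¹) (inv_ne_zero he)
  let ε : ((Fin (d - 1) ⊕ Fin (d - 1)) ⊕ Fin 2) → kˣ :=
    fun i => if i = Sum.inr 1 then c else 1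
  let β'' := β'.unitsSMul ε
  have hβ''app : ∀ i, β'' i = (ε i : k) • β' i := fun i => Module.Basis.unitsSMul_apply i
  have hβ''w : ∀ i, β'' (Sum.inl (Sum.inl i)) = w' i := by
    intro i
    rw [hβ''app]
    have : ε (Sum.inl (Sum.inl i)) = 1 := if_neg (by simp)
    rw [this, Units.val_one, one_smul]
    exact hβw' i
  have hβ''gram : ∀ i j, Q (β'' i) (β'' j) = GramM (d - 1) D i j := by
    intro i j
    rw [hβ''app, hβ''app, map_smul, map_smul, LinearMap.smul_apply, smul_eq_mul, smul_eq_mul,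
      hβgram' i j]
    by_cases hi : i = Sum.inr 1 <;> by_cases hj : j = Sum.inr 1
    · subst hi; subst hj
      have hε : (ε (Sum.inr 1) : k) = e⁻¹ := by simp [ε, c]
      rw [hε]
      have hg1 : GramM (d - 1) D' (Sum.inr 1) (Sum.inr 1) = D' := by
        simp [GramM]
      have hg2 : GramM (d - 1) D (Sum.inr 1) (Sum.inr 1) = D := by
        simp [GramM]
      rw [hg1, hg2, ← he2]
      ring
    · have hζ : GramM (d - 1) D' i j = 0 ∧ GramM (d - 1) D i j = 0 := by
        subst hi
        rcases j with (j | j) | j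
        · simp [GramM]
        · simp [GramM]
        · fin_cases j
          · simp [GramM]
          · exact absurd rfl hj
      rw [hζ.1, hζ.2, mul_zero, mul_zero]
    · have hζ : GramM (d - 1) D' i j = 0 ∧ GramM (d - 1) D i j = 0 := by
        subst hj
        rcases i with (i | i) | i
        · simp [GramM]
        · simp [GramM]
        · fin_cases i
          · simp [GramM]
          · exact absurd rfl hi
      rw [hζ.1, hζ.2, mul_zero, mul_zero]
    · have hεi : (ε i : k) = 1 := by simp [ε, hi]
      have hεj : (ε j : k) = 1 := by simp [ε, hj]
      rw [hεi, hεj, one_mul, one_mul]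
      have : GramM (d - 1) D' i j = GramM (d - 1) D i j := by
        rcases i with (i | i) | i <;> rcases j with (j | j) | j
        · simp [GramM]
        · simp [GramM]
        · simp [GramM]
        · simp [GramM]
        · simp [GramM]
        · simp [GramM]
        · simp [GramM]
        · simp [GramM]
        · have hi0 : i = 0 := by
            fin_cases i
            · rfl
            · exact absurd rfl hi
          have hj0 : j = 0 := by
            fin_cases j
            · rfl
            · exact absurd rfl hj
          subst hi0; subst hj0
          simp [GramM]
      rw [this]
  -- the isometry g
  let g : (Fin (2 * d) → k) ≃ₗ[k] (Fin (2 * d) → k) := β.equiv β'' (Equiv.refl _)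
  have hg : ∀ i, g (β i) = β'' i := fun i => by
    rw [Module.Basis.equiv_apply]
    rfl
  have hisog : ∀ x y, Q (g x) (g y) = Q x y := by
    apply isometry_of_gram Q β g
    intro i j
    rw [hg, hg, hβ''gram, hβgram]
  have hgw : ∀ i, g (w i) = w' i := by
    intro i
    have h3 := hg (Sum.inl (Sum.inl i))
    rw [hβw] at h3
    rw [h3]
    exact hβ''w i
  -- the sign flip h
  let ε2 : ((Fin (d - 1) ⊕ Fin (d - 1)) ⊕ Fin 2) → kˣ :=
    fun i => if i = Sum.inr 1 then -1 else 1
  let β3 := β''.unitsSMul ε2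
  have hβ3app : ∀ i, β3 i = (ε2 i : k) • β'' i := fun i => Module.Basis.unitsSMul_apply i
  have hβ3w : ∀ i, β3 (Sum.inl (Sum.inl i)) = w' i := by
    intro i
    rw [hβ3app]
    have hζ : ε2 (Sum.inl (Sum.inl i)) = 1 := if_neg (by simp)
    rw [hζ, Units.val_one, one_smul]
    exact hβ''w i
  have hβ3gram : ∀ i j, Q (β3 i) (β3 j) = GramM (d - 1) D i j := by
    intro i j
    rw [hβ3app, hβ3app, map_smul, map_smul, LinearMap.smul_apply, smul_eq_mul, smul_eq_mul,
      hβ''gram i j]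
    by_cases hi : i = Sum.inr 1 <;> by_cases hj : j = Sum.inr 1
    · subst hi; subst hj
      have hε : (ε2 (Sum.inr 1) : k) = -1 := by simp [ε2]
      rw [hε]; ring
    · have hζ : GramM (d - 1) D i j = 0 := by
        subst hi
        rcases j with (j | j) | j
        · simp [GramM]
        · simp [GramM]
        · have hj0 : j = 0 := by
            fin_cases j
            · rfl
            · exact absurd rfl hj
          subst hj0; simp [GramM]
      rw [hζ, mul_zero, mul_zero]
    · have hζ : GramM (d - 1) D i j = 0 := by
        subst hj
        rcases i with (i | i) | i
        · simp [GramM]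
        · simp [GramM]
        · have hi0 : i = 0 := by
            fin_cases i
            · rfl
            · exact absurd rfl hi
          subst hi0; simp [GramM]
      rw [hζ, mul_zero, mul_zero]
    · have hεi : (ε2 i : k) = 1 := by simp [ε2, hi]
      have hεj : (ε2 j : k) = 1 := by simp [ε2, hj]
      rw [hεi, hεj]; ring
  let h : (Fin (2 * d) → k) ≃ₗ[k] (Fin (2 * d) → k) := β''.equiv β3 (Equiv.refl _)
  have hh : ∀ i, h (β'' i) = β3 i := fun i => by
    rw [Module.Basis.equiv_apply]
    rfl
  have hisoh : ∀ x y, Q (h x) (h y) = Q x y := by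
    apply isometry_of_gram Q β'' h
    intro i j
    rw [hh, hh, hβ3gram, hβ''gram]
  have hhw : ∀ i, h (w' i) = w' i := by
    intro i
    have h3 := hh (Sum.inl (Sum.inl i))
    rw [hβ''w] at h3
    rw [h3]
    exact hβ3w i
  have hdeth : LinearMap.det (h : (Fin (2 * d) → k) →ₗ[k] (Fin (2 * d) → k)) = -1 := by
    have hmat : LinearMap.toMatrix β'' β'' (h : (Fin (2 * d) → k) →ₗ[k] (Fin (2 * d) → k)) =
        Matrix.diagonal (fun i => ((ε2 i : k))) := by
      ext i j
      rw [LinearMap.toMatrix_apply]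
      have h4 : (h : (Fin (2 * d) → k) →ₗ[k] (Fin (2 * d) → k)) (β'' j) = (ε2 j : k) • β'' j := by
        have h5 := hh j
        rw [hβ3app] at h5
        exact h5
      rw [h4, map_smul, Module.Basis.repr_self, Matrix.diagonal_apply]
      by_cases hij : i = j
      · subst hij; simp
      · simp [Finsupp.single_apply, hij, Ne.symm hij]
    rw [← LinearMap.det_toMatrix β'', hmat, Matrix.det_diagonal]
    rw [Finset.prod_eq_single (Sum.inr 1)]
    · simp [ε2]
    · intro b _ hb
      simp [ε2, hb]
    · intro hmem; exact absurd (Finset.mem_univ _) hmem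
  -- extension property
  have hext : ∀ (G : (Fin (2 * d) → k) ≃ₗ[k] (Fin (2 * d) → k)),
      (∀ i, G (w i) = w' i) → ∀ x : W, G (x : Fin (2 * d) → k) = (f x : Fin (2 * d) → k) := by
    intro G hG x
    have hlin : (G : (Fin (2 * d) → k) →ₗ[k] (Fin (2 * d) → k)) ∘ₗ W.subtype =
        W'.subtype ∘ₗ (f : W →ₗ[k] W') := by
      apply Module.Basis.ext bW
      intro i
      simp only [LinearMap.comp_apply, Submodule.coe_subtype, LinearEquiv.coe_coe]
      have h6 : G ((bW i : Fin (2 * d) → k)) = w' i := hG i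
      rw [h6]
      simp [w', bW', Module.Basis.map_apply]
    have h7 := LinearMap.congr_fun hlin x
    simpa using h7
  rcases isometry_det_pm_one Q hnd g hisog with hdet | hdet
  · exact ⟨g, ⟨hisog, hdet⟩, hext g hgw⟩
  · refine ⟨g.trans h, ⟨?_, ?_⟩, ?_⟩
    · intro x y
      simp only [LinearEquiv.trans_apply]
      rw [hisoh, hisog]
    · have hcoe : ((g.trans h) : (Fin (2 * d) → k) →ₗ[k] (Fin (2 * d) → k)) =
          (h : (Fin (2 * d) → k) →ₗ[k] (Fin (2 * d) → k)) ∘ₗ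
            (g : (Fin (2 * d) → k) →ₗ[k] (Fin (2 * d) → k)) := rfl
      rw [hcoe, LinearMap.det_comp, hdeth, hdet]
      ring
    · apply hext
      intro i
      simp only [LinearEquiv.trans_apply]
      rw [hgw, hhw]
end
end
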